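/- arXiv:2405.01404 — 7 statements merged into one kernel-verified Lean document; each statement's English description precedes it below -/
import Mathlib

section
/- For any vector y strictly dominating the reference vector η in every component, the direction λ*_η(y) := (y − η)/‖y − η‖₂ maximizes the length scalarisation s_{η,λ}(y) over all positive unit vectors λ, and the maximal value equals ‖y − η‖₂. -/
/-!
Every ratio in `s_{η,λ}(y)` dominates `c := s_{η,λ}(y) ≥ 0`, so `c • λ ≤ (y - η)⁺` componentwise and
hence `c = ‖c • λ‖ ≤ ‖y - η‖` since `‖λ‖ = 1`. For `λ = (y - η)/‖y - η‖` every ratio equals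
`‖y - η‖`, so the bound is attained.
-/

/-- The length scalarisation function `s_{η,λ}(y) = min_m max(y^(m) - η^(m), 0) / λ^(m)`. -/
noncomputable def sLen {M : ℕ} (η lam y : EuclideanSpace ℝ (Fin M)) : ℝ :=
  ⨅ m, max (y m - η m) 0 / lam m

/-- The positive part of the unit sphere `S^{M-1}_+`. -/
def Splus (M : ℕ) : Set (EuclideanSpace ℝ (Fin M)) :=
  {z | (∀ m, 0 < z m) ∧ ‖z‖ = 1}

theorem EuclideanSpace.norm_le_norm_of_forall_norm_le {𝕜 ι : Type*} [RCLike 𝕜] [Fintype ι]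
    {x y : EuclideanSpace 𝕜 ι} (h : ∀ i, ‖x i‖ ≤ ‖y i‖) : ‖x‖ ≤ ‖y‖ := by
  rw [EuclideanSpace.norm_eq, EuclideanSpace.norm_eq]
  gcongr with i
  exact h i

section

variable {M : ℕ} (η y : EuclideanSpace ℝ (Fin M))

theorem sLen_nonneg {lam : EuclideanSpace ℝ (Fin M)} (hlam : ∀ m, 0 < lam m) :
    0 ≤ sLen η lam y :=
  Real.iInf_nonneg fun m => div_nonneg (le_max_right _ _) (hlam m).le

theorem sLen_mul_le {lam : EuclideanSpace ℝ (Fin M)} (hlam : ∀ m, 0 < lam m) (m : Fin M) :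
    sLen η lam y * lam m ≤ max (y m - η m) 0 :=
  (le_div_iff₀ (hlam m)).mp <| ciInf_le (Set.finite_range _).bddBelow m

theorem sLen_le_norm_sub {lam : EuclideanSpace ℝ (Fin M)} (hlam : lam ∈ Splus M) :
    sLen η lam y ≤ ‖y - η‖ := by
  obtain ⟨hpos, hnorm⟩ := hlam
  have hc := sLen_nonneg η y hpos
  calc sLen η lam y = ‖sLen η lam y • lam‖ := by
        rw [norm_smul, hnorm, mul_one, Real.norm_of_nonneg hc]
    _ ≤ ‖y - η‖ := by
      refine EuclideanSpace.norm_le_norm_of_forall_norm_le fun m => ?_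
      rw [PiLp.smul_apply, PiLp.sub_apply, smul_eq_mul, Real.norm_eq_abs, Real.norm_eq_abs,
        abs_of_nonneg (mul_nonneg hc (hpos m).le)]
      exact (sLen_mul_le η y hpos m).trans (max_le (le_abs_self _) (abs_nonneg _))

theorem sLen_normalize_eq_norm [NeZero M] (hy : ∀ m, η m < y m) :
    sLen η (‖y - η‖⁻¹ • (y - η)) y = ‖y - η‖ := by
  have hratio : ∀ m, max (y m - η m) 0 / (‖y - η‖⁻¹ • (y - η)) m = ‖y - η‖ := fun m => by
    rw [max_eq_left (sub_pos.mpr (hy m)).le, PiLp.smul_apply, PiLp.sub_apply, smul_eq_mul]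
    field_simp [(sub_pos.mpr (hy m)).ne']
  simp only [sLen, hratio, ciInf_const]

end

theorem normalize_mem_Splus {M : ℕ} {v : EuclideanSpace ℝ (Fin M)} [NeZero M]
    (hv : ∀ m, 0 < v m) : ‖v‖⁻¹ • v ∈ Splus M := by
  have hnorm : 0 < ‖v‖ := norm_pos_iff.mpr fun h => (hv 0).ne' (by simp [h])
  refine ⟨fun m => mul_pos (inv_pos.mpr hnorm) (hv m), ?_⟩
  rw [norm_smul, norm_inv, norm_norm, inv_mul_cancel₀ hnorm.ne']

/-- for `y` strictly dominating `η`, the direction `λ* = (y - η)/‖y - η‖₂`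
lies in `S^{M-1}_+`, it maximises `λ ↦ s_{η,λ}(y)` over positive unit vectors, and the
maximal value equals `‖y - η‖₂`. -/
theorem stmt2 (M : ℕ) (hM : 1 ≤ M) (η y : EuclideanSpace ℝ (Fin M))
    (hy : ∀ m, η m < y m) :
    ‖y - η‖⁻¹ • (y - η) ∈ Splus M ∧
    sLen η (‖y - η‖⁻¹ • (y - η)) y = ‖y - η‖ ∧
    ∀ lam ∈ Splus M, sLen η lam y ≤ ‖y - η‖ := by
  have : NeZero M := ⟨by omega⟩
  exact ⟨normalize_mem_Splus fun m => sub_pos.mpr (hy m), sLen_normalize_eq_norm η y hy,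
    fun _ hlam => sLen_le_norm_sub η y hlam⟩
end

section
/- Let η ∈ ℝ^M and let y strictly dominate η in every component. Then y lies in the truncated weak domination region of a Pareto front surface A* (i.e., there exists a ∈ A* with a ≥ y componentwise) if and only if ‖y − η‖₂ ≤ sup_{a ∈ A*} s_{η, λ*_η(y)}(a), where λ*_η(y) = (y − η)/‖y − η‖₂. -/
/-!
Write `y = η + r λ` with `r = ‖y - η‖` and `λ ∈ S^{M-1}_+`, and let `a₀ = η + t₀ λ` be the point
where the ray from `η` in direction `λ` meets `A`. For `t > 0`, `t ≤ s_{η,λ}(a)` says exactly that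
`a` weakly dominates `η + t λ`. Hence no point of `A` has length exceeding `t₀` (it would strongly
dominate `a₀`), so the projected length of `A` along `λ` is `t₀`, attained at `a₀`, and both sides
of the equivalence say `r ≤ t₀`.
-/

section LengthScalarisation

variable {M : ℕ} {η lam a : EuclideanSpace ℝ (Fin M)}

theorem le_sLen_iff [NeZero M] (hlam : ∀ m, 0 < lam m) {t : ℝ} (ht : 0 < t) :
    t ≤ sLen η lam a ↔ ∀ m, η m + t * lam m ≤ a m := by
  rw [sLen, le_ciInf_iff (Set.finite_range _).bddBelow]
  refine forall_congr' fun m => ?_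
  have htlam : 0 < t * lam m := mul_pos ht (hlam m)
  rw [le_div_iff₀ (hlam m), le_max_iff, ← le_sub_iff_add_le', or_iff_left htlam.not_ge]

theorem sLen_le_of_add_smul_mem [NeZero M] {A : Set (EuclideanSpace ℝ (Fin M))}
    (hpar : ∀ a ∈ A, ∀ b ∈ A, ¬ ∀ m, a m < b m) (hlam : ∀ m, 0 < lam m) {t₀ : ℝ}
    (ht₀ : 0 < t₀) (ha₀ : η + t₀ • lam ∈ A) (ha : a ∈ A) : sLen η lam a ≤ t₀ := by
  by_contra! hlt
  have hdom := (le_sLen_iff hlam (ht₀.trans hlt)).1 le_rfl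
  refine hpar _ ha₀ a ha fun m => ?_
  have := mul_lt_mul_of_pos_right hlt (hlam m)
  simp only [PiLp.add_apply, PiLp.smul_apply, smul_eq_mul]
  linarith [hdom m]

theorem ciSup_sLen_eq_of_add_smul_mem [NeZero M] {A : Set (EuclideanSpace ℝ (Fin M))}
    (hpar : ∀ a ∈ A, ∀ b ∈ A, ¬ ∀ m, a m < b m) (hlam : ∀ m, 0 < lam m) {t₀ : ℝ}
    (ht₀ : 0 < t₀) (ha₀ : η + t₀ • lam ∈ A) : ⨆ a : A, sLen η lam a = t₀ := by
  have hle (a : A) : sLen η lam a ≤ t₀ := sLen_le_of_add_smul_mem hpar hlam ht₀ ha₀ a.2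
  have : Nonempty A := ⟨⟨_, ha₀⟩⟩
  refine le_antisymm (ciSup_le hle) (le_ciSup_of_le ⟨t₀, ?_⟩ ⟨_, ha₀⟩ ?_)
  · rintro _ ⟨a, rfl⟩
    exact hle a
  · exact (le_sLen_iff hlam ht₀).2 fun m => by simp

end LengthScalarisation

theorem stmt3_general (M : ℕ) (hM : 1 ≤ M) (η : EuclideanSpace ℝ (Fin M))
    (A : Set (EuclideanSpace ℝ (Fin M)))
    (hray : ∀ lam ∈ Splus M, ∃! t : ℝ, 0 < t ∧ η + t • lam ∈ A)
    (hpar : ∀ a ∈ A, ∀ b ∈ A, ¬ ∀ m, a m < b m)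
    (y : EuclideanSpace ℝ (Fin M)) (hy : ∀ m, η m < y m) :
    (∃ a ∈ A, ∀ m, y m ≤ a m) ↔
      ‖y - η‖ ≤ ⨆ a : A, sLen η (‖y - η‖⁻¹ • (y - η)) a := by
  have : NeZero M := ⟨by omega⟩
  have hyη : y - η ≠ 0 := sub_ne_zero.2 fun h => (hy 0).ne' (by rw [h])
  set r := ‖y - η‖
  set lam := r⁻¹ • (y - η)
  have hr : 0 < r := norm_pos_iff.2 hyη
  have hlam (m : Fin M) : 0 < lam m := by
    simpa [lam] using mul_pos (inv_pos.2 hr) (sub_pos.2 (hy m))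
  have hy_eq (m : Fin M) : y m = η m + r * lam m := by
    rw [PiLp.smul_apply, PiLp.sub_apply, smul_eq_mul, mul_inv_cancel_left₀ hr.ne']
    ring
  obtain ⟨t₀, ⟨ht₀, ha₀⟩, -⟩ := hray lam ⟨hlam, norm_smul_inv_norm hyη⟩
  rw [ciSup_sLen_eq_of_add_smul_mem hpar hlam ht₀ ha₀]
  constructor
  · rintro ⟨a, ha, hya⟩
    have hra : r ≤ sLen η lam a := (le_sLen_iff hlam hr).2 fun m => hy_eq m ▸ hya m
    exact hra.trans (sLen_le_of_add_smul_mem hpar hlam ht₀ ha₀ ha)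
  · intro hrt
    refine ⟨_, ha₀, fun m => ?_⟩
    rw [hy_eq m]
    simpa using mul_le_mul_of_nonneg_right hrt (hlam m).le

/-- domination equivalence, weak case: for a Pareto front surface `A`
with reference `η` and a vector `y` strictly dominating `η`, `y` lies in the truncated
weak domination region of `A` iff `‖y - η‖₂ ≤ ℓ_{η, λ*_η(y)}[A] = sup_{a ∈ A} s_{η, λ*_η(y)}(a)`,
where `λ*_η(y) = (y - η)/‖y - η‖₂`. -/
theorem stmt3 (M : ℕ) (hM : 1 ≤ M) (η : EuclideanSpace ℝ (Fin M))
    (A : Set (EuclideanSpace ℝ (Fin M))) (hne : A.Nonempty)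
    (hbdd : Bornology.IsBounded A)
    (hdom : ∀ a ∈ A, ∀ m, η m < a m)
    (hray : ∀ lam ∈ Splus M, ∃! t : ℝ, 0 < t ∧ η + t • lam ∈ A)
    (hpar : ∀ a ∈ A, ∀ b ∈ A, ¬ ∀ m, a m < b m)
    (y : EuclideanSpace ℝ (Fin M)) (hy : ∀ m, η m < y m) :
    (∃ a ∈ A, ∀ m, y m ≤ a m) ↔
      ‖y - η‖ ≤ ⨆ a : A, sLen η (‖y - η‖⁻¹ • (y - η)) a :=
  stmt3_general M hM η A hray hpar y hy
end

section
/- Let η ∈ ℝ^M and let y strictly dominate η in every component. Then there exists a ∈ A* with a^(m) > y^(m) for all m if and only if ‖y − η‖₂ < ℓ_{η, λ*_η(y)}[A*], where λ*_η(y) = (y − η)/‖y − η‖₂ and ℓ_{η,λ}[A*] = sup_{a ∈ A*} s_{η,λ}(a). -/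
section
variable {M : ℕ} {η lam y a : EuclideanSpace ℝ (Fin M)} {r : ℝ}

theorem inv_norm_smul_sub_apply (m : Fin M) :
    (‖y - η‖⁻¹ • (y - η)) m = ‖y - η‖⁻¹ * (y m - η m) := by
  simp

variable [Nonempty (Fin M)]

theorem lt_sLen_iff (hlam : ∀ m, 0 < lam m) (hr : 0 ≤ r) :
    r < sLen η lam a ↔ ∀ m, η m + r * lam m < a m := by
  have hterm : ∀ m, r < max (a m - η m) 0 / lam m ↔ η m + r * lam m < a m := fun m => by
    have : 0 ≤ r * lam m := mul_nonneg hr (hlam m).le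
    rw [lt_div_iff₀ (hlam m), lt_max_iff]
    constructor
    · rintro (h | h) <;> linarith
    · intro h; left; linarith
  obtain ⟨m₀, hm₀⟩ := exists_eq_ciInf_of_finite (f := fun m => max (a m - η m) 0 / lam m)
  refine ⟨fun h m => (hterm m).1 (h.trans_le (ciInf_le (Finite.bddBelow_range _) m)), fun h => ?_⟩
  rw [sLen, ← hm₀]
  exact (hterm m₀).2 (h m₀)

theorem sLen_le_of_not_lt (hlam : ∀ m, 0 < lam m) (hr : 0 ≤ r)
    (h : ¬ ∀ m, (η + r • lam) m < a m) : sLen η lam a ≤ r :=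
  not_lt.1 fun hlt => h ((lt_sLen_iff hlam hr).1 hlt)

theorem sLen_add_smul (hlam : ∀ m, 0 < lam m) (hr : 0 ≤ r) :
    sLen η lam (η + r • lam) = r := by
  have hterm : ∀ m, max ((η + r • lam) m - η m) 0 / lam m = r := fun m => by
    simp [mul_nonneg hr (hlam m).le, (hlam m).ne']
  simp only [sLen, hterm, ciInf_const]

theorem iSup_sLen_eq_of_not_dominated {A : Set (EuclideanSpace ℝ (Fin M))}
    (hlam : ∀ m, 0 < lam m) (hr : 0 ≤ r) (hmem : η + r • lam ∈ A)
    (hpar : ∀ a ∈ A, ¬ ∀ m, (η + r • lam) m < a m) :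
    ⨆ a : A, sLen η lam a = r := by
  have : Nonempty A := ⟨⟨_, hmem⟩⟩
  have hle : ∀ a : A, sLen η lam a ≤ r := fun a => sLen_le_of_not_lt hlam hr (hpar a a.2)
  refine le_antisymm (ciSup_le hle) ?_
  calc r = sLen η lam (η + r • lam) := (sLen_add_smul hlam hr).symm
    _ ≤ ⨆ a : A, sLen η lam a :=
      le_ciSup (f := fun a : A => sLen η lam a) ⟨r, Set.forall_mem_range.2 hle⟩ ⟨_, hmem⟩

theorem norm_sub_pos_of_forall_lt (hy : ∀ m, η m < y m) : 0 < ‖y - η‖ :=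
  norm_pos_iff.2 <| sub_ne_zero.2 fun h => (hy (Classical.arbitrary _)).ne (by rw [h])

theorem inv_norm_smul_sub_mem_Splus (hy : ∀ m, η m < y m) :
    ‖y - η‖⁻¹ • (y - η) ∈ Splus M := by
  have hpos := norm_sub_pos_of_forall_lt hy
  refine ⟨fun m => ?_, norm_smul_inv_norm (norm_pos_iff.1 hpos)⟩
  rw [inv_norm_smul_sub_apply]
  exact mul_pos (inv_pos.2 hpos) (sub_pos.2 (hy m))

theorem norm_sub_lt_sLen_iff (hy : ∀ m, η m < y m) :
    ‖y - η‖ < sLen η (‖y - η‖⁻¹ • (y - η)) a ↔ ∀ m, y m < a m := by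
  rw [lt_sLen_iff (inv_norm_smul_sub_mem_Splus hy).1 (norm_nonneg _)]
  simp only [inv_norm_smul_sub_apply, mul_inv_cancel_left₀ (norm_sub_pos_of_forall_lt hy).ne',
    add_sub_cancel]

end

theorem stmt4_general (M : ℕ) (hM : 1 ≤ M) (η : EuclideanSpace ℝ (Fin M))
    (A : Set (EuclideanSpace ℝ (Fin M)))
    (hray : ∀ lam ∈ Splus M, ∃! t : ℝ, 0 < t ∧ η + t • lam ∈ A)
    (hpar : ∀ a ∈ A, ∀ b ∈ A, ¬ ∀ m, a m < b m)
    (y : EuclideanSpace ℝ (Fin M)) (hy : ∀ m, η m < y m) :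
    (∃ a ∈ A, ∀ m, y m < a m) ↔
      ‖y - η‖ < ⨆ a : A, sLen η (‖y - η‖⁻¹ • (y - η)) a := by
  have : Nonempty (Fin M) := ⟨⟨0, hM⟩⟩
  set lam := ‖y - η‖⁻¹ • (y - η)
  have hlam : ∀ m, 0 < lam m := (inv_norm_smul_sub_mem_Splus hy).1
  obtain ⟨t, ⟨ht, hmem⟩, -⟩ := hray lam (inv_norm_smul_sub_mem_Splus hy)
  rw [iSup_sLen_eq_of_not_dominated hlam ht.le hmem (hpar _ hmem)]
  constructor
  · rintro ⟨a, ha, hya⟩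
    exact ((norm_sub_lt_sLen_iff hy).2 hya).trans_le
      (sLen_le_of_not_lt hlam ht.le (hpar _ hmem a ha))
  · intro hlt
    refine ⟨_, hmem, (norm_sub_lt_sLen_iff hy).1 ?_⟩
    rwa [sLen_add_smul hlam ht.le]

/-- domination equivalence, strict case: for a Pareto front surface `A`
with reference `η` and a vector `y` strictly dominating `η`, `y` lies in the truncated
weak domination region of `A` strictly (all components) iff `‖y - η‖₂ < ℓ_{η, λ*_η(y)}[A] = sup_{a ∈ A} s_{η, λ*_η(y)}(a)`,
where `λ*_η(y) = (y - η)/‖y - η‖₂`. -/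
theorem stmt4 (M : ℕ) (hM : 1 ≤ M) (η : EuclideanSpace ℝ (Fin M))
    (A : Set (EuclideanSpace ℝ (Fin M))) (hne : A.Nonempty)
    (hbdd : Bornology.IsBounded A)
    (hdom : ∀ a ∈ A, ∀ m, η m < a m)
    (hray : ∀ lam ∈ Splus M, ∃! t : ℝ, 0 < t ∧ η + t • lam ∈ A)
    (hpar : ∀ a ∈ A, ∀ b ∈ A, ¬ ∀ m, a m < b m)
    (y : EuclideanSpace ℝ (Fin M)) (hy : ∀ m, η m < y m) :
    (∃ a ∈ A, ∀ m, y m < a m) ↔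
      ‖y - η‖ < ⨆ a : A, sLen η (‖y - η‖⁻¹ • (y - η)) a :=
  stmt4_general M hM η A hray hpar y hy
end

section
/- For a single point a strictly dominating η in all components, the interpolated weak Pareto front of the singleton {a} truncated at η equals the polar surface {η + s_{η,λ}(a) λ : λ ∈ S^{M−1}_+}. -/
/-- The weak Pareto domination region `D_⪯[A]` of a set `A`. -/
def weakDom {M : ℕ} (A : Set (EuclideanSpace ℝ (Fin M))) : Set (EuclideanSpace ℝ (Fin M)) :=
  {y | ∃ a ∈ A, ∀ m, y m ≤ a m}

/-- The interpolated weak Pareto front of `A` truncated at `η`: the points of the closure of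
the weak domination region of `A` that are not strongly dominated by any point of that region,
intersected with the region strictly dominating `η`. -/
def truncFront {M : ℕ} (η : EuclideanSpace ℝ (Fin M)) (A : Set (EuclideanSpace ℝ (Fin M))) :
    Set (EuclideanSpace ℝ (Fin M)) :=
  {y ∈ closure (weakDom A) | ∀ z ∈ closure (weakDom A), ¬ ∀ m, y m < z m} ∩
    {y | ∀ m, η m < y m}

/-!
For a single point `a`, the weak domination region is the closed box `{y ≤ a}`, and its
non-strongly-dominated points are those of the box touching its upper faces: `y ≤ a` with
`y m = a m` for some `m`. Along the ray `η + t • λ` with `λ > 0` this happens exactly at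
`t = min_m (a m - η m) / λ m = s_{η,λ}(a)`. Conversely, a front point `y > η` lies on the ray
through its normalised direction `(y - η) / ‖y - η‖ ∈ S^{M-1}_+`.
-/

open Set

section

variable {M : ℕ}

lemma closure_weakDom_singleton (a : EuclideanSpace ℝ (Fin M)) :
    closure (weakDom {a}) = {y | ∀ m, y m ≤ a m} := by
  have hclosed : IsClosed {y : EuclideanSpace ℝ (Fin M) | ∀ m, y m ≤ a m} := by
    simp only [ofPred_forall]
    exact isClosed_iInter fun m => isClosed_le (by fun_prop) continuous_const
  rw [← hclosed.closure_eq]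
  simp [weakDom]

lemma mem_truncFront_singleton_iff {η a y : EuclideanSpace ℝ (Fin M)} :
    y ∈ truncFront η {a} ↔
      (∀ m, y m ≤ a m) ∧ (∃ m, y m = a m) ∧ ∀ m, η m < y m := by
  simp only [truncFront, closure_weakDom_singleton, mem_inter_iff, mem_ofPred_eq, and_assoc]
  refine and_congr_right fun hya => and_congr_left' ⟨fun hnd => ?_, ?_⟩
  · by_contra! hne
    exact hnd a (fun _ => le_rfl) fun m => (hya m).lt_of_ne (hne m)
  · rintro ⟨m, hm⟩ z hz hlt
    exact (hlt m).not_ge (hm ▸ hz m)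

lemma sLen_eq_iInf_div {η lam a : EuclideanSpace ℝ (Fin M)} (hηa : ∀ m, η m ≤ a m) :
    sLen η lam a = ⨅ m, (a m - η m) / lam m := by
  simp only [sLen, max_eq_left (sub_nonneg.2 (hηa _))]

lemma sLen_eq_iff [Nonempty (Fin M)] {η lam a : EuclideanSpace ℝ (Fin M)} {t : ℝ}
    (hlam : ∀ m, 0 < lam m) (hηa : ∀ m, η m ≤ a m) :
    sLen η lam a = t ↔ (∀ m, η m + t * lam m ≤ a m) ∧ ∃ m, η m + t * lam m = a m := by
  have hle : ∀ m, η m + t * lam m ≤ a m ↔ t ≤ (a m - η m) / lam m := fun m => by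
    rw [le_div_iff₀ (hlam m)]; constructor <;> intro h <;> linarith
  have heq : ∀ m, η m + t * lam m = a m ↔ t = (a m - η m) / lam m := fun m => by
    rw [eq_div_iff (hlam m).ne']; constructor <;> intro h <;> linarith
  simp only [hle, heq, sLen_eq_iInf_div hηa]
  constructor
  · rintro rfl
    exact ⟨fun m => ciInf_le (Finite.bddBelow_range _) m,
      (exists_eq_ciInf_of_finite).imp fun _ h => h.symm⟩
  · rintro ⟨hlow, m, rfl⟩
    exact le_antisymm (ciInf_le (Finite.bddBelow_range _) m) (le_ciInf hlow)

lemma inv_norm_smul_mem_Splus [Nonempty (Fin M)] {v : EuclideanSpace ℝ (Fin M)}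
    (hv : ∀ m, 0 < v m) : ‖v‖⁻¹ • v ∈ Splus M := by
  have hv0 : v ≠ 0 := fun h => (hv (Classical.arbitrary _)).ne' (by simp [h])
  refine ⟨fun m => ?_, norm_smul_inv_norm hv0⟩
  simpa using mul_pos (inv_pos.2 (norm_pos_iff.2 hv0)) (hv m)

end

theorem stmt5_general (M : ℕ) (η a : EuclideanSpace ℝ (Fin M))
    (ha : ∀ m, η m < a m) :
    truncFront η {a} = {y | ∃ lam ∈ Splus M, y = η + sLen η lam a • lam} := by
  have hηa : ∀ m, η m ≤ a m := fun m => (ha m).le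
  ext y
  rw [mem_truncFront_singleton_iff]
  constructor
  · rintro ⟨hya, ⟨m₀, hm₀⟩, hηy⟩
    have : Nonempty (Fin M) := ⟨m₀⟩
    set v := y - η
    have hv : ∀ m, 0 < v m := fun m => by simpa [v] using hηy m
    have hv0 : ‖v‖ ≠ 0 := norm_ne_zero_iff.2 fun h => (hv m₀).ne' (by simp [h])
    have hray : ∀ m, η m + ‖v‖ * (‖v‖⁻¹ • v) m = y m := fun m => by
      simp [v, hv0]
    have hs : sLen η (‖v‖⁻¹ • v) a = ‖v‖ :=
      ((sLen_eq_iff (inv_norm_smul_mem_Splus hv).1 hηa).2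
        ⟨fun m => (hray m).symm ▸ hya m, ⟨m₀, (hray m₀).trans hm₀⟩⟩)
    refine ⟨_, inv_norm_smul_mem_Splus hv, ?_⟩
    rw [hs, smul_inv_smul₀ hv0]
    simp [v]
  · rintro ⟨lam, ⟨hlam, hnorm⟩, rfl⟩
    obtain ⟨m₀, -⟩ : ∃ m, lam m ≠ 0 := by
      by_contra! h
      simp [show lam = 0 from PiLp.ext h] at hnorm
    have : Nonempty (Fin M) := ⟨m₀⟩
    obtain ⟨hle, m₁, hm₁⟩ := (sLen_eq_iff hlam hηa).1 rfl
    have hs : 0 < sLen η lam a := pos_of_mul_pos_left (by linarith [ha m₁]) (hlam m₁).le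
    exact ⟨hle, ⟨m₁, hm₁⟩, fun m => by simp [mul_pos hs (hlam m)]⟩

/-- for a single point `a` strictly dominating `η`, the truncated interpolated
weak Pareto front of the singleton `{a}` equals the polar surface
`{η + s_{η,λ}(a) • λ : λ ∈ S^{M-1}_+}`. -/
theorem stmt5 (M : ℕ) (hM : 1 ≤ M) (η a : EuclideanSpace ℝ (Fin M))
    (ha : ∀ m, η m < a m) :
    truncFront η {a} = {y | ∃ lam ∈ Splus M, y = η + sLen η lam a • lam} :=
  stmt5_general M η a ha
end

section
/- The set of Pareto front surfaces with reference η is closed under the length-wise addition operation: if A*, B* are Pareto front surfaces, then A* ⊕ B* := {η + (ℓ_{η,λ}[A*] + ℓ_{η,λ}[B*]) λ : λ ∈ S^{M−1}_+} is again a Pareto front surface. -/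
/-- The projected length `ℓ_{η,λ}[A]`. -/
noncomputable def projLen {M : ℕ} (η : EuclideanSpace ℝ (Fin M))
    (A : Set (EuclideanSpace ℝ (Fin M))) (lam : EuclideanSpace ℝ (Fin M)) : ℝ :=
  sSup {t : ℝ | 0 < t ∧ η + t • lam ∈ A}

/-- `A` is a Pareto front surface with reference `η`: it lies strictly above `η`
componentwise, each positive ray from `η` meets `A` exactly once, the projected lengths
are positive, and the maximum ratio condition holds. -/
def IsParetoFrontSurface {M : ℕ} (η : EuclideanSpace ℝ (Fin M))
    (A : Set (EuclideanSpace ℝ (Fin M))) : Prop :=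
  (∀ a ∈ A, ∀ m, η m < a m) ∧
  (∀ lam ∈ Splus M, ∃! t : ℝ, 0 < t ∧ η + t • lam ∈ A) ∧
  (∀ lam ∈ Splus M, 0 < projLen η A lam) ∧
  (∀ lam ∈ Splus M, ∀ ups ∈ Splus M,
    1 ≤ ⨆ m, (projLen η A lam * lam m) / (projLen η A ups * ups m))

/-
Along each direction `λ` the sum meets the ray from `η` only at `η + (ℓ_A(λ) + ℓ_B(λ)) λ`, so
it is polar with projected lengths `ℓ_A + ℓ_B`. For the ratio condition, let `m*` maximise
`λ_m / υ_m`; whatever the scalars `a, a' > 0`, the maximal ratio `(a λ_m) / (a' υ_m)` is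
attained at `m*`. The conditions for `A` and `B` thus read `ℓ_A(υ) υ_{m*} ≤ ℓ_A(λ) λ_{m*}` and
`ℓ_B(υ) υ_{m*} ≤ ℓ_B(λ) λ_{m*}`, and adding them gives the condition for the sum.
-/

section MaxRatio

variable {ι : Type*} [Finite ι]

lemma iSup_mul_div_mul_eq_of_forall_div_le {x y : ι → ℝ} {i : ι}
    (hi : ∀ j, x j / y j ≤ x i / y i) {a b : ℝ} (hab : 0 ≤ a / b) :
    ⨆ j, a * x j / (b * y j) = a * x i / (b * y i) := by
  have : Nonempty ι := ⟨i⟩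
  refine le_antisymm (ciSup_le fun j => ?_)
    (le_ciSup (f := fun j => a * x j / (b * y j)) (Set.finite_range _).bddAbove i)
  rw [mul_div_mul_comm, mul_div_mul_comm]
  exact mul_le_mul_of_nonneg_left (hi j) hab

lemma one_le_iSup_add_mul_div_add_mul {x y : ι → ℝ} (hy : ∀ j, 0 < y j) {a a' b b' : ℝ}
    (ha : 0 ≤ a) (ha' : 0 < a') (hb : 0 ≤ b) (hb' : 0 < b')
    (hA : 1 ≤ ⨆ j, a * x j / (a' * y j)) (hB : 1 ≤ ⨆ j, b * x j / (b' * y j)) :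
    1 ≤ ⨆ j, (a + b) * x j / ((a' + b') * y j) := by
  have : Nonempty ι := by
    by_contra h
    rw [not_nonempty_iff] at h
    simp only [Real.iSup_of_isEmpty] at hA
    linarith
  obtain ⟨i, hi⟩ := Finite.exists_max fun j => x j / y j
  rw [iSup_mul_div_mul_eq_of_forall_div_le hi (div_nonneg ha ha'.le)] at hA
  rw [iSup_mul_div_mul_eq_of_forall_div_le hi (div_nonneg hb hb'.le)] at hB
  rw [iSup_mul_div_mul_eq_of_forall_div_le hi (div_nonneg (add_nonneg ha hb) (add_pos ha' hb').le)]
  rw [one_le_div (mul_pos ha' (hy i))] at hA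
  rw [one_le_div (mul_pos hb' (hy i))] at hB
  rw [one_le_div (mul_pos (add_pos ha' hb') (hy i))]
  linarith

end MaxRatio

section RadialGraph

variable {M : ℕ}

lemma Splus.eq_of_smul_eq_smul {s t : ℝ} {lam ups : EuclideanSpace ℝ (Fin M)}
    (hlam : lam ∈ Splus M) (hups : ups ∈ Splus M) (hs : 0 < s) (ht : 0 < t)
    (h : s • lam = t • ups) : s = t ∧ lam = ups := by
  have hn : ‖s • lam‖ = ‖t • ups‖ := by rw [h]
  rw [norm_smul, norm_smul, hlam.2, hups.2, Real.norm_of_nonneg hs.le,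
    Real.norm_of_nonneg ht.le, mul_one, mul_one] at hn
  subst hn
  exact ⟨rfl, smul_right_injective _ hs.ne' h⟩

def radialGraph (η : EuclideanSpace ℝ (Fin M)) (f : EuclideanSpace ℝ (Fin M) → ℝ) :
    Set (EuclideanSpace ℝ (Fin M)) :=
  {y | ∃ lam ∈ Splus M, y = η + f lam • lam}

variable {η lam : EuclideanSpace ℝ (Fin M)} {f : EuclideanSpace ℝ (Fin M) → ℝ}

lemma add_smul_mem_radialGraph_iff (hf : ∀ lam ∈ Splus M, 0 < f lam) (hlam : lam ∈ Splus M)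
    {t : ℝ} (ht : 0 < t) : η + t • lam ∈ radialGraph η f ↔ t = f lam := by
  constructor
  · rintro ⟨ups, hups, h⟩
    obtain ⟨rfl, rfl⟩ := Splus.eq_of_smul_eq_smul hlam hups ht (hf ups hups) (add_left_cancel h)
    rfl
  · rintro rfl
    exact ⟨lam, hlam, rfl⟩

lemma projLen_radialGraph (hf : ∀ lam ∈ Splus M, 0 < f lam) (hlam : lam ∈ Splus M) :
    projLen η (radialGraph η f) lam = f lam := by
  have hray : {t : ℝ | 0 < t ∧ η + t • lam ∈ radialGraph η f} = {f lam} := by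
    ext t
    simp only [Set.mem_ofPred_eq, Set.mem_singleton_iff]
    constructor
    · rintro ⟨ht, hmem⟩
      exact (add_smul_mem_radialGraph_iff hf hlam ht).mp hmem
    · rintro rfl
      exact ⟨hf lam hlam, ⟨lam, hlam, rfl⟩⟩
  rw [projLen, hray, csSup_singleton]

lemma isParetoFrontSurface_radialGraph (hf : ∀ lam ∈ Splus M, 0 < f lam)
    (hratio : ∀ lam ∈ Splus M, ∀ ups ∈ Splus M,
      1 ≤ ⨆ m, f lam * lam m / (f ups * ups m)) :
    IsParetoFrontSurface η (radialGraph η f) := by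
  refine ⟨?_, fun lam hlam => ?_, fun lam hlam => ?_, fun lam hlam ups hups => ?_⟩
  · rintro _ ⟨lam, hlam, rfl⟩ m
    have : 0 < f lam * lam m := mul_pos (hf lam hlam) (hlam.1 m)
    simp only [PiLp.add_apply, PiLp.smul_apply, smul_eq_mul]
    linarith
  · exact ⟨f lam, ⟨hf lam hlam, lam, hlam, rfl⟩,
      fun t ⟨ht, hmem⟩ => (add_smul_mem_radialGraph_iff hf hlam ht).mp hmem⟩
  · rw [projLen_radialGraph hf hlam]
    exact hf lam hlam
  · rw [projLen_radialGraph hf hlam, projLen_radialGraph hf hups]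
    exact hratio lam hlam ups hups

end RadialGraph

theorem stmt9_general (M : ℕ) (η : EuclideanSpace ℝ (Fin M))
    (A B : Set (EuclideanSpace ℝ (Fin M)))
    (hA : IsParetoFrontSurface η A) (hB : IsParetoFrontSurface η B) :
    IsParetoFrontSurface η
      {y | ∃ lam ∈ Splus M, y = η + (projLen η A lam + projLen η B lam) • lam} := by
  obtain ⟨-, -, hA_pos, hA_ratio⟩ := hA
  obtain ⟨-, -, hB_pos, hB_ratio⟩ := hB
  refine isParetoFrontSurface_radialGraph (fun lam hlam => add_pos (hA_pos lam hlam)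
    (hB_pos lam hlam)) fun lam hlam ups hups => ?_
  exact one_le_iSup_add_mul_div_add_mul hups.1 (hA_pos lam hlam).le (hA_pos ups hups)
    (hB_pos lam hlam).le (hB_pos ups hups) (hA_ratio lam hlam ups hups)
    (hB_ratio lam hlam ups hups)

/-- length-wise addition: Pareto front surfaces are closed under the
operation `A ⊕ B = {η + (ℓ_{η,λ}[A] + ℓ_{η,λ}[B]) • λ : λ ∈ S^{M-1}_+}`. -/
theorem stmt9 (M : ℕ) (hM : 1 ≤ M) (η : EuclideanSpace ℝ (Fin M))
    (A B : Set (EuclideanSpace ℝ (Fin M)))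
    (hA : IsParetoFrontSurface η A) (hB : IsParetoFrontSurface η B) :
    IsParetoFrontSurface η
      {y | ∃ lam ∈ Splus M, y = η + (projLen η A lam + projLen η B lam) • lam} :=
  stmt9_general M η A B hA hB
end

section
/- Expected Pareto front surface is a Pareto front surface: let (Ω, F, ℙ) be a probability space and Y*(ω) a random Pareto front surface with reference η whose projected lengths ℓ_{η,λ}[Y*(ω)] are measurable, positive almost surely, and uniformly bounded almost surely. Then the set {η + E_ω[ℓ_{η,λ}[Y*(ω)]] λ : λ ∈ S^{M−1}_+} satisfies both the positive-lengths condition and the maximum-ratio condition, and hence is a valid Pareto front surface. -/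
/-!
Positivity of the expected lengths follows from almost sure positivity on a probability space.
For the maximum-ratio condition, write `K = ⨆ m, λ m / υ m`: for positive lengths `a, b` the
condition `1 ≤ ⨆ m, a λ m / (b υ m)` is equivalent to the linear inequality `b ≤ a K`, which
survives integration.
-/

open MeasureTheory

theorem integral_pos_of_ae_pos {α : Type*} [MeasurableSpace α] {μ : Measure α} [NeZero μ]
    {f : α → ℝ} (hfi : Integrable f μ) (hf : ∀ᵐ x ∂μ, 0 < f x) : 0 < ∫ x, f x ∂μ := by
  refine (integral_pos_iff_support_of_nonneg_ae (hf.mono fun _ hx => hx.le) hfi).2 ?_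
  refine pos_iff_ne_zero.2 fun h0 => ?_
  obtain ⟨x, hx, hx0⟩ := (hf.and (measure_eq_zero_iff_ae_notMem.1 h0)).exists
  exact hx0 hx.ne'

theorem one_le_iSup_mul_div_mul_iff {ι : Type*} {a b : ℝ} (ha : 0 ≤ a) (hb : 0 < b)
    (u v : ι → ℝ) : 1 ≤ ⨆ i, a * u i / (b * v i) ↔ b ≤ a * ⨆ i, u i / v i := by
  simp_rw [mul_div_mul_comm a, ← Real.mul_iSup_of_nonneg (div_nonneg ha hb.le), div_mul_eq_mul_div,
    one_le_div hb]

theorem one_le_iSup_integral_mul_div_mul {Ω ι : Type*} [MeasurableSpace Ω] {μ : Measure Ω}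
    [NeZero μ] {f g : Ω → ℝ} (hf : Integrable f μ) (hg : Integrable g μ)
    (hf0 : ∀ᵐ ω ∂μ, 0 ≤ f ω) (hg0 : ∀ᵐ ω ∂μ, 0 < g ω) (u v : ι → ℝ)
    (h : ∀ᵐ ω ∂μ, 1 ≤ ⨆ i, f ω * u i / (g ω * v i)) :
    1 ≤ ⨆ i, (∫ ω, f ω ∂μ) * u i / ((∫ ω, g ω ∂μ) * v i) := by
  rw [one_le_iSup_mul_div_mul_iff (integral_nonneg_of_ae hf0) (integral_pos_of_ae_pos hg hg0),
    ← integral_mul_const]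
  refine integral_mono_ae hg (hf.mul_const _) ?_
  filter_upwards [h, hf0, hg0] with ω hω hfω hgω
  exact (one_le_iSup_mul_div_mul_iff hfω hgω u v).1 hω

theorem stmt13_general (M : ℕ) (η : EuclideanSpace ℝ (Fin M))
    {Ω : Type*} [MeasurableSpace Ω] (P : Measure Ω) [IsProbabilityMeasure P]
    (Y : Ω → Set (EuclideanSpace ℝ (Fin M)))
    (hint : ∀ lam ∈ Splus M, Integrable (fun ω => projLen η (Y ω) lam) P)
    (hpos : ∀ lam ∈ Splus M, ∀ᵐ ω ∂P, 0 < projLen η (Y ω) lam)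
    (hratio : ∀ lam ∈ Splus M, ∀ ups ∈ Splus M, ∀ᵐ ω ∂P,
      1 ≤ ⨆ m, (projLen η (Y ω) lam * lam m) / (projLen η (Y ω) ups * ups m)) :
    (∀ lam ∈ Splus M, 0 < ∫ ω, projLen η (Y ω) lam ∂P) ∧
      ∀ lam ∈ Splus M, ∀ ups ∈ Splus M,
        1 ≤ ⨆ m, ((∫ ω, projLen η (Y ω) lam ∂P) * lam m) /
            ((∫ ω, projLen η (Y ω) ups ∂P) * ups m) :=
  ⟨fun lam hlam => integral_pos_of_ae_pos (hint lam hlam) (hpos lam hlam),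
    fun lam hlam ups hups =>
      one_le_iSup_integral_mul_div_mul (hint lam hlam) (hint ups hups)
        ((hpos lam hlam).mono fun _ h => h.le) (hpos ups hups) lam ups (hratio lam hlam ups hups)⟩

/-- expected Pareto front surface: if `Y*(ω)` is a random Pareto front
surface with reference `η` whose projected lengths are measurable, integrable, positive
a.s., uniformly bounded a.s., and satisfy the maximum ratio condition a.s., then the
expected projected lengths `λ ↦ E_ω[ℓ_{η,λ}[Y*(ω)]]` satisfy the positive-lengths
condition and the maximum-ratio condition, so the set
`{η + E_ω[ℓ_{η,λ}[Y*(ω)]] • λ : λ ∈ S^{M-1}_+}` is a valid Pareto front surface. -/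
theorem stmt13 (M : ℕ) (hM : 1 ≤ M) (η : EuclideanSpace ℝ (Fin M))
    {Ω : Type*} [MeasurableSpace Ω] (P : Measure Ω) [IsProbabilityMeasure P]
    (Y : Ω → Set (EuclideanSpace ℝ (Fin M)))
    (hmeas : ∀ lam ∈ Splus M, Measurable fun ω => projLen η (Y ω) lam)
    (hint : ∀ lam ∈ Splus M, Integrable (fun ω => projLen η (Y ω) lam) P)
    (hray : ∀ᵐ ω ∂P, ∀ lam ∈ Splus M, ∃! t : ℝ, 0 < t ∧ η + t • lam ∈ Y ω)
    (hpos : ∀ lam ∈ Splus M, ∀ᵐ ω ∂P, 0 < projLen η (Y ω) lam)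
    (hbdd : ∃ C : ℝ, ∀ᵐ ω ∂P, ∀ lam ∈ Splus M, projLen η (Y ω) lam ≤ C)
    (hratio : ∀ lam ∈ Splus M, ∀ ups ∈ Splus M, ∀ᵐ ω ∂P,
      1 ≤ ⨆ m, (projLen η (Y ω) lam * lam m) / (projLen η (Y ω) ups * ups m)) :
    (∀ lam ∈ Splus M, 0 < ∫ ω, projLen η (Y ω) lam ∂P) ∧
      ∀ lam ∈ Splus M, ∀ ups ∈ Splus M,
        1 ≤ ⨆ m, ((∫ ω, projLen η (Y ω) lam ∂P) * lam m) /
            ((∫ ω, projLen η (Y ω) ups ∂P) * ups m) :=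
  stmt13_general M η P Y hint hpos hratio
end

section
/- Gumbel limit of projected lengths for Weibull samples: let Y_1, …, Y_N be i.i.d. ℝ^M-valued random vectors with independent components Y_n^(m) ~ Weibull(α, β^(m)), let η = 0, and fix a positive unit vector λ. Then with k_λ = (Σ_m (β^(m) λ^(m))^α)^{1/α}, a_N = (log N)^{1/α − 1}/(α k_λ), b_N = (log N)^{1/α}/k_λ, the normalized maximum of the scalarised values satisfies lim_{N→∞} ℙ[(max_{n≤N} s_{0,λ}(Y_n) − b_N)/a_N ≤ x] = exp(−exp(−x)) for every x ∈ ℝ. -/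
/-!
Because `λ > 0`, `s_{0,λ}(y) ≤ t` holds iff `y^(m) ≤ t λ^(m)` for some `m`, so by independence
of the components `ℙ[s_{0,λ}(Y_n) > t] = ∏_m exp(-(β^(m) λ^(m) t)^α) = exp(-(k_λ t)^α)`: the
scalarised values are i.i.d. Weibull`(α, k_λ)`. Hence the maximum of `N` of them is at most
`t_N = a_N x + b_N` with probability `(1 - exp(-(k_λ t_N)^α))^N`, and since
`(k_λ t_N)^α = log N · (1 + x/(α log N))^α = log N + x + o(1)`, we get
`N exp(-(k_λ t_N)^α) → e^{-x}`, so this power tends to `exp(-e^{-x})`.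
-/

open MeasureTheory ProbabilityTheory Filter

/-- The length scalarisation with reference `0`:
`s_{0,λ}(y) = min_m max(y^(m), 0)/λ^(m)`. -/
noncomputable def sLen0 {M : ℕ} (lam : EuclideanSpace ℝ (Fin M)) (y : Fin M → ℝ) : ℝ :=
  ⨅ m, max (y m) 0 / lam m

open Real Topology

lemma Real.biSup_le_iff_of_nonneg {ι : Type*} {s : Finset ι} {f : ι → ℝ} {t : ℝ} (ht : 0 ≤ t) :
    (⨆ i ∈ s, f i) ≤ t ↔ ∀ i ∈ s, f i ≤ t := by
  refine ⟨fun h i hi => (le_ciSup₂ (f := fun i (_ : i ∈ s) => f i) ?_ i hi).trans h,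
    fun h => Real.iSup_le (fun i => Real.iSup_le (h i) ht) ht⟩
  refine (s.finite_toSet.image f).bddAbove.mono ?_
  simp only [Set.iUnion_subset_iff, Set.range_subset_iff]
  exact fun i hi => Set.mem_image_of_mem f hi

lemma tendsto_mul_one_add_div_rpow_sub_one (c α : ℝ) :
    Tendsto (fun y : ℝ => y * ((1 + c / y) ^ α - 1)) atTop (𝓝 (c * α)) := by
  have hderiv : HasDerivAt (fun z : ℝ => (1 + c * z) ^ α) (c * α) 0 := by
    have := ((hasDerivAt_id (0 : ℝ)).const_mul c).const_add 1 |>.rpow_const (p := α)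
      (Or.inl (by simp))
    simpa using this
  have hinv : Tendsto (fun y : ℝ => y⁻¹) atTop (𝓝[≠] 0) :=
    tendsto_inv_atTop_nhdsGT_zero.mono_right (nhdsWithin_mono _ fun y hy => ne_of_gt hy)
  refine ((hasDerivAt_iff_tendsto_slope.mp hderiv).comp hinv).congr' ?_
  filter_upwards [eventually_ne_atTop 0] with y hy
  simp [slope_def_field, div_eq_mul_inv, mul_comm c, mul_comm y]

lemma tendsto_natCast_mul_exp_neg_log_mul_rpow {α : ℝ} (hα : α ≠ 0) (x : ℝ) :
    Tendsto (fun n : ℕ => n * exp (-(log n * (1 + x / (α * log n)) ^ α))) atTop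
      (𝓝 (exp (-x))) := by
  have hlog : Tendsto (fun n : ℕ => log n) atTop atTop :=
    tendsto_log_atTop.comp tendsto_natCast_atTop_atTop
  have h := (tendsto_mul_one_add_div_rpow_sub_one (x / α) α).comp hlog
  rw [div_mul_cancel₀ x hα] at h
  refine ((continuous_exp.tendsto _).comp h.neg).congr' ?_
  filter_upwards [eventually_gt_atTop 0] with n hn
  have hn' : (0 : ℝ) < n := Nat.cast_pos.mpr hn
  simp only [Function.comp_apply, div_div, mul_comm α]
  rw [mul_sub, mul_one, neg_sub, sub_eq_add_neg, exp_add, exp_log hn']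

lemma gumbel_threshold_eq {L α : ℝ} (hL : 0 < L) (hα : α ≠ 0) (k x : ℝ) :
    x * (L ^ (α⁻¹ - 1) / (α * k)) + L ^ α⁻¹ / k = L ^ α⁻¹ / k * (1 + x / (α * L)) := by
  rw [rpow_sub hL, rpow_one]
  field_simp
  ring

lemma mul_div_rpow_inv_mul_rpow {K L α s : ℝ} (hK : 0 < K) (hL : 0 < L) (hα : α ≠ 0)
    (hs : 0 ≤ s) : K * (L ^ α⁻¹ / K ^ α⁻¹ * s) ^ α = L * s ^ α := by
  rw [mul_rpow (by positivity) hs, div_rpow (by positivity) (by positivity),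
    rpow_inv_rpow hL.le hα, rpow_inv_rpow hK.le hα]
  field_simp

lemma sLen0_le_iff {M : ℕ} [Nonempty (Fin M)] {lam : EuclideanSpace ℝ (Fin M)}
    (hlam : ∀ m, 0 < lam m) {t : ℝ} (ht : 0 ≤ t) (y : Fin M → ℝ) :
    sLen0 lam y ≤ t ↔ ∃ m, y m ≤ t * lam m := by
  have hterm : ∀ m, max (y m) 0 / lam m ≤ t ↔ y m ≤ t * lam m := fun m => by
    rw [div_le_iff₀ (hlam m), max_le_iff, and_iff_left (mul_nonneg ht (hlam m).le)]
  obtain ⟨m₀, hm₀⟩ := exists_eq_ciInf_of_finite (f := fun m => max (y m) 0 / lam m)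
  refine ⟨fun h => ⟨m₀, (hterm m₀).1 (hm₀ ▸ h)⟩, fun ⟨m, hm⟩ => ?_⟩
  exact (ciInf_le (Set.finite_range _).bddBelow m).trans ((hterm m).2 hm)

lemma measurable_sLen0 {M : ℕ} (lam : EuclideanSpace ℝ (Fin M)) : Measurable (sLen0 lam) :=
  Measurable.iInf fun m => ((measurable_pi_apply m).max measurable_const).div_const _

def HasWeibullCDF {Ω : Type*} [MeasurableSpace Ω] (X : Ω → ℝ) (P : Measure Ω) (α β : ℝ) :
    Prop :=
  ∀ x : ℝ, P {ω | X ω ≤ x} = if 0 ≤ x then ENNReal.ofReal (1 - exp (-(β * x) ^ α)) else 0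

section Probability

variable {Ω : Type*} [MeasurableSpace Ω] {P : Measure Ω}

lemma ProbabilityTheory.iIndepFun.curry {ι κ β : Type*} [MeasurableSpace β] {X : ι × κ → Ω → β}
    (hX : ∀ p, Measurable (X p)) (h : iIndepFun X P) :
    iIndepFun (fun i ω j => X (i, j) ω) P := by
  have := h.isProbabilityMeasure
  have hrow (i : ι) :
      P.map (fun ω j => X (i, j) ω) = Measure.infinitePi fun j => P.map (X (i, j)) :=
    (h.precomp (Prod.mk_right_injective i)).map_fun_eq_infinitePi_map fun j => hX _
  rw [iIndepFun_iff_map_fun_eq_infinitePi_map fun i => measurable_pi_lambda _ fun j => hX _]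
  calc P.map (fun ω i j => X (i, j) ω)
      = (P.map fun ω p => X p ω).map (MeasurableEquiv.curry ι κ β) := by
        rw [Measure.map_map (MeasurableEquiv.measurable _) (measurable_pi_lambda _ hX)]; rfl
    _ = Measure.infinitePi fun i => Measure.infinitePi fun j => P.map (X (i, j)) := by
        rw [h.map_fun_eq_infinitePi_map hX]
        have _ (i : ι) (j : κ) :=
          Measure.isProbabilityMeasure_map (μ := P) (hX (i, j)).aemeasurable
        exact Measure.infinitePi_map_curry fun i j => P.map (X (i, j))
    _ = Measure.infinitePi fun i => P.map fun ω j => X (i, j) ω := by simp_rw [hrow]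

lemma HasWeibullCDF.measure_preimage_Ioi [IsProbabilityMeasure P] {X : Ω → ℝ} {α β : ℝ}
    (h : HasWeibullCDF X P α β) (hX : Measurable X) (hβ : 0 ≤ β) {s : ℝ} (hs : 0 ≤ s) :
    P (X ⁻¹' Set.Ioi s) = ENNReal.ofReal (exp (-(β * s) ^ α)) := by
  have hle : exp (-(β * s) ^ α) ≤ 1 := exp_le_one_iff.2 (neg_nonpos.2 (by positivity))
  rw [← Set.compl_Iic, Set.preimage_compl, prob_compl_eq_one_sub (hX measurableSet_Iic),
    show X ⁻¹' Set.Iic s = {ω | X ω ≤ s} from rfl, h s, if_pos hs, ← ENNReal.ofReal_one,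
    ← ENNReal.ofReal_sub _ (by linarith), sub_sub_cancel]

lemma measure_sLen0_le_of_hasWeibullCDF [IsProbabilityMeasure P] {M : ℕ} [Nonempty (Fin M)]
    {V : Ω → Fin M → ℝ} (hV : ∀ m, Measurable fun ω => V ω m)
    (hindep : iIndepFun (fun m ω => V ω m) P) {α : ℝ} {β : Fin M → ℝ} (hβ : ∀ m, 0 ≤ β m)
    (hW : ∀ m, HasWeibullCDF (fun ω => V ω m) P α (β m))
    {lam : EuclideanSpace ℝ (Fin M)} (hlam : ∀ m, 0 < lam m) {t : ℝ} (ht : 0 ≤ t) :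
    P {ω | sLen0 lam (V ω) ≤ t} =
      ENNReal.ofReal (1 - exp (-((∑ m, (β m * lam m) ^ α) * t ^ α))) := by
  have hset : {ω | sLen0 lam (V ω) ≤ t} =
      (⋂ m ∈ Finset.univ, (fun ω => V ω m) ⁻¹' Set.Ioi (t * lam m))ᶜ := by
    ext ω
    simp [sLen0_le_iff hlam ht]
  have hsurv : ∀ m, P ((fun ω => V ω m) ⁻¹' Set.Ioi (t * lam m)) =
      ENNReal.ofReal (exp (-((β m * lam m) ^ α * t ^ α))) := fun m => by
    rw [(hW m).measure_preimage_Ioi (hV m) (hβ m) (by have := hlam m; positivity), ← mul_rpow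
      (by have := hβ m; have := hlam m; positivity) ht, mul_assoc, mul_comm (lam m)]
  rw [hset, prob_compl_eq_one_sub (Finset.measurableSet_biInter _
      fun m _ => hV m measurableSet_Ioi),
    hindep.measure_inter_preimage_eq_mul _ fun m _ => measurableSet_Ioi]
  simp_rw [hsurv]
  rw [← ENNReal.ofReal_prod_of_nonneg fun m _ => (exp_pos _).le, ← exp_sum,
    Finset.sum_mul, ← Finset.sum_neg_distrib, ← ENNReal.ofReal_one,
    ← ENNReal.ofReal_sub _ (exp_pos _).le]

lemma measure_biSup_le_eq_pow {ι : Type*} {Z : ι → Ω → ℝ} (hindep : iIndepFun Z P) {t : ℝ}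
    (ht : 0 ≤ t) {p : ENNReal} (hp : ∀ i, P {ω | Z i ω ≤ t} = p) (s : Finset ι) :
    P {ω | ⨆ i ∈ s, Z i ω ≤ t} = p ^ s.card := by
  have hset : {ω | ⨆ i ∈ s, Z i ω ≤ t} = ⋂ i ∈ s, Z i ⁻¹' Set.Iic t := by
    ext ω
    simp [Real.biSup_le_iff_of_nonneg ht]
  rw [hset, hindep.measure_inter_preimage_eq_mul _ fun i _ => measurableSet_Iic]
  exact (Finset.prod_congr rfl fun i _ => hp i).trans (Finset.prod_const p)

end Probability

theorem stmt19_general (M : ℕ) (hM : 1 ≤ M)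
    {Ω : Type*} [MeasurableSpace Ω] (P : Measure Ω) [IsProbabilityMeasure P]
    (α : ℝ) (hα : 0 < α) (β : Fin M → ℝ) (hβ : ∀ m, 0 < β m)
    (Y : ℕ → Ω → (Fin M → ℝ)) (hmeas : ∀ n m, Measurable fun ω => Y n ω m)
    (hindep : iIndepFun
      (fun (p : ℕ × Fin M) ω => Y p.1 ω p.2) P)
    (hcdf : ∀ n m, ∀ x : ℝ, P {ω | Y n ω m ≤ x} =
      if 0 ≤ x then ENNReal.ofReal (1 - Real.exp (-(β m * x) ^ α)) else 0)
    (lam : EuclideanSpace ℝ (Fin M)) (hlam : ∀ m, 0 < lam m) :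
    ∀ x : ℝ,
      Tendsto (fun N : ℕ =>
        (P {ω |
          ((⨆ n ∈ Finset.range N, sLen0 lam (Y n ω)) -
              Real.log N ^ (α⁻¹) / (∑ m, (β m * lam m) ^ α) ^ α⁻¹) /
            (Real.log N ^ (α⁻¹ - 1) / (α * (∑ m, (β m * lam m) ^ α) ^ α⁻¹)) ≤ x}).toReal)
        atTop (nhds (Real.exp (-Real.exp (-x)))) := by
  intro x
  have : Nonempty (Fin M) := ⟨⟨0, hM⟩⟩
  set K := ∑ m, (β m * lam m) ^ α
  have hK : 0 < K :=
    Finset.sum_pos (fun m _ => rpow_pos_of_pos (mul_pos (hβ m) (hlam m)) α) Finset.univ_nonempty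
  have hZ : iIndepFun (fun n ω => sLen0 lam (Y n ω)) P :=
    (hindep.curry fun p : ℕ × Fin M => hmeas p.1 p.2).comp _ fun _ => measurable_sLen0 lam
  have hcdfZ (t : ℝ) (ht : 0 ≤ t) (n : ℕ) :
      P {ω | sLen0 lam (Y n ω) ≤ t} = ENNReal.ofReal (1 - exp (-(K * t ^ α))) :=
    measure_sLen0_le_of_hasWeibullCDF (hmeas n) (hindep.precomp (Prod.mk_right_injective n))
      (fun m => (hβ m).le) (hcdf n) hlam ht
  have hlarge : ∀ᶠ N : ℕ in atTop, 0 < log N ∧ -x ≤ α * log N := by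
    have hlog := tendsto_log_atTop.comp tendsto_natCast_atTop_atTop
    filter_upwards [hlog.eventually_gt_atTop 0, hlog.eventually_ge_atTop (-x / α)] with N h0 h1
    exact ⟨h0, (div_le_iff₀' hα).1 h1⟩
  have htail := (tendsto_natCast_mul_exp_neg_log_mul_rpow hα.ne' x).neg
  refine (tendsto_one_add_pow_exp_of_tendsto
    (htail.congr fun n => (mul_neg _ _).symm)).congr' ?_
  filter_upwards [hlarge] with N ⟨hL, hxL⟩
  have hu : 0 ≤ 1 + x / (α * log N) := by
    rw [← neg_le_iff_add_nonneg', le_div_iff₀ (by positivity)]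
    linarith
  simp_rw [div_le_iff₀ (by positivity : (0 : ℝ) < log N ^ (α⁻¹ - 1) / (α * K ^ α⁻¹)),
    sub_le_iff_le_add, gumbel_threshold_eq hL hα.ne']
  rw [measure_biSup_le_eq_pow hZ (by positivity) (hcdfZ _ (by positivity)), Finset.card_range,
    ENNReal.toReal_pow, ENNReal.toReal_ofReal
      (sub_nonneg.2 (exp_le_one_iff.2 (neg_nonpos.2 (by positivity)))),
    mul_div_rpow_inv_mul_rpow hK hL hα.ne' hu, sub_eq_add_neg]

/-- Gumbel limit of projected lengths for Weibull samples: let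
`Y_1, Y_2, …` be i.i.d. random vectors in `ℝ^M` with mutually independent components
`Y_n^(m) ~ Weibull(α, β^(m))`, and let `λ` be a positive unit vector. With
`k_λ = (Σ_m (β^(m) λ^(m))^α)^{1/α}`, `a_N = (log N)^{1/α - 1}/(α k_λ)` and
`b_N = (log N)^{1/α}/k_λ`, the normalised maximum of the scalarised values,
`(max_{n < N} s_{0,λ}(Y_n) - b_N)/a_N`, converges in distribution to the standard
Gumbel distribution. -/
theorem stmt19 (M : ℕ) (hM : 1 ≤ M)
    {Ω : Type*} [MeasurableSpace Ω] (P : Measure Ω) [IsProbabilityMeasure P]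
    (α : ℝ) (hα : 0 < α) (β : Fin M → ℝ) (hβ : ∀ m, 0 < β m)
    (Y : ℕ → Ω → (Fin M → ℝ)) (hmeas : ∀ n m, Measurable fun ω => Y n ω m)
    (hindep : iIndepFun
      (fun (p : ℕ × Fin M) ω => Y p.1 ω p.2) P)
    (hcdf : ∀ n m, ∀ x : ℝ, P {ω | Y n ω m ≤ x} =
      if 0 ≤ x then ENNReal.ofReal (1 - Real.exp (-(β m * x) ^ α)) else 0)
    (lam : EuclideanSpace ℝ (Fin M)) (hlam : ∀ m, 0 < lam m) (hunit : ‖lam‖ = 1) :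
    ∀ x : ℝ,
      Tendsto (fun N : ℕ =>
        (P {ω |
          ((⨆ n ∈ Finset.range N, sLen0 lam (Y n ω)) -
              Real.log N ^ (α⁻¹) / (∑ m, (β m * lam m) ^ α) ^ α⁻¹) /
            (Real.log N ^ (α⁻¹ - 1) / (α * (∑ m, (β m * lam m) ^ α) ^ α⁻¹)) ≤ x}).toReal)
        atTop (nhds (Real.exp (-Real.exp (-x)))) :=
  stmt19_general M hM P α hα β hβ Y hmeas hindep hcdf lam hlam
end
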